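/- Every m-Dyck path P of size n ≥ 1 admits unique decompositions P = (((ρ_m ×_m P_0) ×_{m−1} P_1) ×_{m−2} ... ) ×_0 P_m and P = P'_0 ×_0 ((((ρ_m ×_m P'_1) ×_{m−1} P'_2) ... ×_2 P'_{m−1}) ×_1 P'_m) for unique families of m-Dyck paths P_0,...,P_m and P'_0,...,P'_m (possibly empty, i.e., of size 0), with sizes summing to n−1 in each case. -/
import Mathlib


def stepVal (m : ℕ) (b : Bool) : ℤ := if b then (m : ℤ) else -1

def pathSum (m : ℕ) (P : List Bool) : ℤ := (P.map (stepVal m)).sum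

def IsDyck (m : ℕ) (P : List Bool) : Prop :=
  pathSum m P = 0 ∧ ∀ Q : List Bool, Q <+: P → 0 ≤ pathSum m Q

def Ltop (P : List Bool) : ℕ := (P.reverse.takeWhile (fun b => !b)).length

def concatAt (P Q : List Bool) (j : ℕ) : List Bool :=
  P.take (P.length - j) ++ Q ++ List.replicate j false

/-- `ρ_m`, the unique `m`-Dyck path of size 1. -/
def rho (m : ℕ) : List Bool := true :: List.replicate m false

/-- `buildAux j X [Q₀, Q₁, …]` is `((X ×_j Q₀) ×_{j−1} Q₁) ×_{j−2} …`. -/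
def buildAux : ℕ → List Bool → List (List Bool) → List Bool
  | _, X, [] => X
  | j, X, Q :: rest => buildAux (j - 1) (concatAt X Q j) rest

lemma pathSum_nil (m : ℕ) : pathSum m [] = 0 := rfl

lemma pathSum_cons (m : ℕ) (b : Bool) (P : List Bool) :
    pathSum m (b :: P) = stepVal m b + pathSum m P := by
  simp [pathSum]

lemma pathSum_append (m : ℕ) (A B : List Bool) :
    pathSum m (A ++ B) = pathSum m A + pathSum m B := by
  simp [pathSum]

lemma pathSum_replicate_false (m j : ℕ) :
    pathSum m (List.replicate j false) = -(j : ℤ) := by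
  induction j with
  | zero => simp [pathSum]
  | succ k ih => rw [List.replicate_succ, pathSum_cons, ih]; simp [stepVal]

def glue : List (List Bool) → List Bool
  | [] => []
  | Q :: rest => Q ++ (rest.map (fun R => false :: R)).flatten

lemma glue_cons (Q : List Bool) (Rs : List (List Bool)) (h : Rs ≠ []) :
    glue (Q :: Rs) = Q ++ false :: glue Rs := by
  obtain ⟨R, rest, rfl⟩ := List.exists_cons_of_ne_nil h
  simp [glue]

lemma glue_concat (Rs : List (List Bool)) (h : Rs ≠ []) (Q : List Bool) :
    glue (Rs ++ [Q]) = glue Rs ++ false :: Q := by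
  obtain ⟨R, rest, rfl⟩ := List.exists_cons_of_ne_nil h
  simp [glue]

lemma count_glue (Qs : List (List Bool)) :
    (glue Qs).count true = (Qs.map (fun Q => Q.count true)).sum := by
  induction Qs with
  | nil => simp [glue]
  | cons Q rest ih =>
    rcases eq_or_ne rest [] with rfl | h
    · simp [glue]
    · rw [glue_cons _ _ h]
      simp only [List.count_append, List.count_cons, List.map_cons, List.sum_cons, ih]
      simp

lemma glue_sum (m : ℕ) (Qs : List (List Bool)) (hD : ∀ Q ∈ Qs, IsDyck m Q) (h : Qs ≠ []) :
    pathSum m (glue Qs) = 1 - (Qs.length : ℤ) := by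
  induction Qs with
  | nil => simp at h
  | cons Q rest ih =>
    rcases eq_or_ne rest [] with rfl | hr
    · simp [glue, (hD Q (by simp)).1]
    · rw [glue_cons _ _ hr, pathSum_append, pathSum_cons,
        ih (fun R hR => hD R (by simp [hR])) hr, (hD Q (by simp)).1]
      simp [stepVal]
      push_cast [List.length_pos_iff.mpr hr]
      ring

lemma prefix_append_cases {Q A B : List Bool} (h : Q <+: A ++ B) :
    Q <+: A ∨ ∃ Q', Q' <+: B ∧ Q = A ++ Q' := by
  rcases le_or_gt Q.length A.length with hl | hl
  · left
    have := List.prefix_iff_eq_take.mp h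
    rw [List.take_append_of_le_length hl] at this
    exact this ▸ List.take_prefix _ _
  · right
    refine ⟨B.take (Q.length - A.length), List.take_prefix _ _, ?_⟩
    have := List.prefix_iff_eq_take.mp h
    rw [List.take_append, List.take_of_length_le (le_of_lt hl)] at this
    exact this

lemma glue_prefix_ge (m : ℕ) (Qs : List (List Bool)) (hD : ∀ Q ∈ Qs, IsDyck m Q)
    (h : Qs ≠ []) : ∀ Q, Q <+: glue Qs → 1 - (Qs.length : ℤ) ≤ pathSum m Q := by
  induction Qs with
  | nil => simp at h
  | cons A rest ih =>
    intro Q hQ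
    rcases eq_or_ne rest [] with rfl | hr
    · simp only [glue, List.map_nil, List.flatten_nil, List.append_nil] at hQ
      simpa using (hD A (by simp)).2 Q hQ
    · rw [glue_cons _ _ hr] at hQ
      rcases prefix_append_cases hQ with hQ | ⟨Q', hQ', rfl⟩
      · have h0 : (0:ℤ) ≤ pathSum m Q := (hD A (by simp)).2 Q hQ
        have hlen : (1:ℤ) ≤ ((A :: rest).length : ℤ) := by exact_mod_cast Nat.succ_le_succ (Nat.zero_le _)
        linarith
      · rcases Q' with _ | ⟨b, Q''⟩
        · rw [pathSum_append, (hD A (by simp)).1, pathSum_nil]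
          have hlen : (1:ℤ) ≤ ((A :: rest).length : ℤ) := by exact_mod_cast Nat.succ_le_succ (Nat.zero_le _)
          linarith
        · obtain ⟨rfl, hQ''⟩ := List.cons_prefix_cons.mp hQ'
          have hih := ih (fun R hR => hD R (by simp [hR])) hr Q'' hQ''
          rw [pathSum_append, (hD A (by simp)).1, pathSum_cons]
          simp only [stepVal, if_neg (by simp : ¬ (false = true))]
          have : ((A :: rest).length : ℤ) = (rest.length : ℤ) + 1 := by
            simp only [List.length_cons]; push_cast; ring
          rw [this]
          linarith

lemma build_eq : ∀ (Qs : List (List Bool)) (j : ℕ) (Y : List Bool), Qs ≠ [] →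
    Qs.length ≤ j + 1 →
    buildAux j (Y ++ List.replicate j false) Qs
      = Y ++ glue Qs ++ List.replicate (j + 1 - Qs.length) false := by
  intro Qs
  induction Qs with
  | nil => intro _ _ h; simp at h
  | cons Q rest ih =>
    intro j Y _ hlen
    have hcat : concatAt (Y ++ List.replicate j false) Q j = Y ++ Q ++ List.replicate j false := by
      simp [concatAt, List.take_append_of_le_length]
    rcases eq_or_ne rest [] with rfl | hr
    · simp only [buildAux, hcat]
      simp [glue]
    · have hj : 1 ≤ j := by
        have : 2 ≤ (Q :: rest).length := by
          cases rest with
          | nil => exact absurd rfl hr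
          | cons _ _ => simp
        omega
      obtain ⟨j', rfl⟩ : ∃ j', j = j' + 1 := ⟨j - 1, by omega⟩
      simp only [buildAux, hcat, Nat.add_sub_cancel]
      have hrep : Y ++ Q ++ List.replicate (j' + 1) false
          = (Y ++ Q ++ [false]) ++ List.replicate j' false := by
        rw [List.replicate_succ]; simp
      rw [hrep, ih j' (Y ++ Q ++ [false]) hr (by simp only [List.length_cons] at hlen; omega)]
      rw [glue_cons _ _ hr]
      have : j' + 1 + 1 - (Q :: rest).length = j' + 1 - rest.length := by simp
      rw [this]
      simp

lemma split_unique (m : ℕ) (T : List Bool) (h : pathSum m T < 0) :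
    ∃! p : List Bool × List Bool, IsDyck m p.1 ∧ T = p.1 ++ false :: p.2 := by
  classical
  have hex : ∃ i, pathSum m (T.take i) < 0 := ⟨T.length, by simpa using h⟩
  obtain ⟨n₀, hspec, hmin, hleast⟩ : ∃ n₀, pathSum m (T.take n₀) < 0 ∧
      (∀ i < n₀, 0 ≤ pathSum m (T.take i)) ∧
      ∀ i, pathSum m (T.take i) < 0 → n₀ ≤ i := by
    refine ⟨Nat.find hex, Nat.find_spec hex, ?_, fun i hi => Nat.find_le hi⟩
    intro i hi
    have := Nat.find_min hex hi
    omega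
  have hpos : 1 ≤ n₀ := by
    rcases Nat.eq_zero_or_pos n₀ with h0 | h0
    · rw [h0] at hspec; simp [pathSum] at hspec
    · exact h0
  obtain ⟨i, rfl⟩ : ∃ i, n₀ = i + 1 := ⟨n₀ - 1, by omega⟩
  have hle : i + 1 ≤ T.length := hleast _ (by simpa using h)
  have hlt : i < T.length := by omega
  have hprev : 0 ≤ pathSum m (T.take i) := hmin _ (by omega)
  have hget : T.take (i + 1) = T.take i ++ [T[i]] := by
    rw [List.take_succ, List.getElem?_eq_getElem hlt]
    simp
  have hsf : pathSum m [false] = -1 := by simp [pathSum, stepVal]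
  have hst : pathSum m [true] = (m : ℤ) := by simp [pathSum, stepVal]
  have hstep : T[i] = false := by
    by_contra hc
    rw [Bool.not_eq_false] at hc
    rw [hget, hc, pathSum_append, hst] at hspec
    have : (0:ℤ) ≤ (m:ℤ) := by positivity
    omega
  have hsum0 : pathSum m (T.take i) = 0 := by
    rw [hget, hstep, pathSum_append, hsf] at hspec
    omega
  have hdyck : IsDyck m (T.take i) := by
    refine ⟨hsum0, fun Q hQ => ?_⟩
    have hQt : Q = T.take Q.length :=
      List.prefix_iff_eq_take.mp (hQ.trans (List.take_prefix _ _))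
    have hQl : Q.length ≤ i := by
      have := hQ.length_le
      simp only [List.length_take] at this
      omega
    have := hmin Q.length (by omega)
    rwa [← hQt] at this
  have hdecomp : T = T.take i ++ false :: T.drop (i + 1) := by
    conv_lhs => rw [← List.take_append_drop i T]
    congr 1
    rw [List.drop_eq_getElem_cons hlt, hstep]
  refine ⟨(T.take i, T.drop (i + 1)), ⟨hdyck, hdecomp⟩, ?_⟩
  rintro ⟨A, T'⟩ ⟨hA, hT⟩
  simp only at hA hT
  have hT2 : T = (A ++ [false]) ++ T' := by rw [hT]; simp
  have hApre : A = T.take A.length := by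
    have : A <+: T := hT2 ▸ ((List.prefix_append A [false]).trans (List.prefix_append _ T'))
    exact List.prefix_iff_eq_take.mp this
  have hAn : A.length = i := by
    have hlt2 : i + 1 ≤ A.length + 1 := by
      apply hleast
      have : T.take (A.length + 1) = A ++ [false] := by
        rw [hT2]
        have : A.length + 1 = (A ++ [false]).length := by simp
        rw [this, List.take_left]
      rw [this, pathSum_append, hA.1, hsf]
      omega
    have hge : ¬ (i + 1 ≤ A.length) := by
      intro hcon
      have h1 : T.take (i+1) <+: A := by
        rw [hApre]
        have : T.take (i+1) = (T.take A.length).take (i+1) := by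
          rw [List.take_take, min_eq_left hcon]
        rw [this]
        exact List.take_prefix _ _
      have := hA.2 _ h1
      omega
    omega
  have hAeq : A = T.take i := by rw [hApre, hAn]
  have hT'eq : T' = T.drop (i + 1) := by
    rw [hT2]
    have hl : i + 1 = (A ++ [false]).length := by simp [hAn]
    rw [hl, List.drop_left]
  have : (A, T') = (T.take i, T.drop (i+1)) := by rw [hAeq, hT'eq]
  exact this


lemma decomp_unique (m : ℕ) : ∀ (k : ℕ) (T : List Bool), pathSum m T = -(k : ℤ) →
    (∀ Q, Q <+: T → -(k : ℤ) ≤ pathSum m Q) →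
    ∃! Qs : List (List Bool), Qs.length = k + 1 ∧ (∀ Q ∈ Qs, IsDyck m Q) ∧ T = glue Qs := by
  intro k
  induction k with
  | zero =>
    intro T hsum hpre
    refine ⟨[T], ⟨rfl, ?_, by simp [glue]⟩, ?_⟩
    · intro Q hQ
      simp only [List.mem_singleton] at hQ
      subst hQ
      exact ⟨by simpa using hsum, fun Q hQ => by simpa using hpre Q hQ⟩
    · rintro Qs ⟨hlen, _, hT⟩
      obtain ⟨Q, rfl⟩ := List.length_eq_one_iff.mp hlen
      simp only [glue, List.map_nil, List.flatten_nil, List.append_nil] at hT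
      simp [hT]
  | succ k ih =>
    intro T hsum hpre
    have hneg : pathSum m T < 0 := by rw [hsum]; push_cast; omega
    obtain ⟨⟨A, T'⟩, ⟨hA, hdec⟩, huniq⟩ := split_unique m T hneg
    simp only at hA hdec huniq
    have hsf : pathSum m [false] = -1 := by simp [pathSum, stepVal]
    have hsum' : pathSum m T' = -(k : ℤ) := by
      have : T = (A ++ [false]) ++ T' := by rw [hdec]; simp
      rw [this, pathSum_append, pathSum_append, hA.1, hsf] at hsum
      push_cast at hsum ⊢
      linarith
    have hpre' : ∀ Q, Q <+: T' → -(k : ℤ) ≤ pathSum m Q := by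
      intro Q hQ
      obtain ⟨s, rfl⟩ := hQ
      have hp : (A ++ false :: Q) <+: T := ⟨s, by rw [hdec]; simp⟩
      have := hpre _ hp
      rw [pathSum_append, pathSum_cons, hA.1] at this
      simp only [stepVal, if_neg (by simp : ¬ (false = true))] at this
      have hQs : pathSum m Q ≤ pathSum m Q := le_refl _
      push_cast at this ⊢
      linarith
    obtain ⟨Qs', ⟨hlen', hD', hT'⟩, huniq'⟩ := ih T' hsum' hpre'
    have hQs'ne : Qs' ≠ [] := by intro hc; rw [hc] at hlen'; simp at hlen'
    refine ⟨A :: Qs', ⟨by simp [hlen'], ?_, ?_⟩, ?_⟩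
    · intro Q hQ
      rcases List.mem_cons.mp hQ with rfl | hQ
      · exact hA
      · exact hD' Q hQ
    · rw [glue_cons _ _ hQs'ne, ← hT', hdec]
    · rintro Qs ⟨hlen, hD, hT⟩
      obtain ⟨B, Rs, rfl⟩ := List.exists_cons_of_ne_nil
        (by intro hc; rw [hc] at hlen; simp at hlen : (Qs ≠ []))
      have hRs : Rs ≠ [] := by
        intro hc
        rw [hc] at hlen
        simp at hlen
      rw [glue_cons _ _ hRs] at hT
      have hBA := huniq (B, glue Rs) ⟨hD B (by simp), hT⟩
      rw [Prod.mk.injEq] at hBA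
      obtain ⟨hB, hGR⟩ := hBA
      have hRsQ := huniq' Rs ⟨by simp at hlen; omega,
        fun Q hQ => hD Q (by simp [hQ]), hGR.symm⟩
      rw [hB, hRsQ]

lemma isDyck_nil (m : ℕ) : IsDyck m [] :=
  ⟨rfl, fun Q hQ => by rw [List.prefix_nil.mp hQ]; exact le_refl 0⟩

/-- Every `m`-Dyck path `P` of size `n ≥ 1` admits unique decompositions
`P = (((ρ_m ×_m P₀) ×_{m−1} P₁) ⋯ ) ×_0 P_m` and
`P = P'₀ ×₀ ((((ρ_m ×_m P'₁) ×_{m−1} P'₂) ⋯ ×_2 P'_{m−1}) ×_1 P'_m)` for unique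
families of (possibly empty) `m`-Dyck paths with sizes summing to `n−1`. -/
theorem dyck_vee_decompositions (m n : ℕ) (hm : 1 ≤ m) (hn : 1 ≤ n)
    (P : List Bool) (hP : IsDyck m P) (hsize : P.count true = n) :
    (∃! Ps : List (List Bool),
      Ps.length = m + 1 ∧ (∀ Q ∈ Ps, IsDyck m Q)
        ∧ (Ps.map (fun Q => Q.count true)).sum = n - 1
        ∧ P = buildAux m (rho m) Ps)
    ∧ (∃! Ps : List (List Bool),
      Ps.length = m + 1 ∧ (∀ Q ∈ Ps, IsDyck m Q)
        ∧ (Ps.map (fun Q => Q.count true)).sum = n - 1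
        ∧ P = Ps.headD [] ++ buildAux m (rho m) Ps.tail) := by
  have hrho0 : rho m = true :: List.replicate m false := rfl
  constructor
  ·  classical
      have hsf : pathSum m [false] = -1 := by simp [pathSum, stepVal]
      have hst : pathSum m [true] = (m : ℤ) := by simp [pathSum, stepVal]
      have hPne : P ≠ [] := by
        intro hc
        rw [hc] at hsize
        simp at hsize
        omega
      have hrho : rho m = [true] ++ List.replicate m false := rfl
      obtain ⟨b, T, hPbt⟩ := List.exists_cons_of_ne_nil hPne
      have hb : b = true := by
        by_contra hc
        rw [Bool.not_eq_true] at hc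
        have h1 : [b] <+: P := ⟨T, by rw [hPbt]; rfl⟩
        have := hP.2 _ h1
        rw [hc, hsf] at this
        omega
      subst hb
      subst hPbt
      have hsumT : pathSum m T = -(m : ℤ) := by
        have := hP.1
        rw [pathSum_cons] at this
        simp only [stepVal, if_true] at this
        linarith
      have hpreT : ∀ Q, Q <+: T → -(m : ℤ) ≤ pathSum m Q := by
        intro Q hQ
        obtain ⟨s, rfl⟩ := hQ
        have h1 : (true :: Q) <+: (true :: (Q ++ s)) := ⟨s, by simp⟩
        have := hP.2 _ h1
        rw [pathSum_cons] at this
        simp only [stepVal, if_true] at this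
        linarith
      obtain ⟨Qs, ⟨hlen, hD, hT⟩, huniq⟩ := decomp_unique m m T hsumT hpreT
      have hQsne : Qs ≠ [] := by intro hc; rw [hc] at hlen; simp at hlen
      have hbuild : ∀ Rs : List (List Bool), Rs.length = m + 1 →
          buildAux m (rho m) Rs = true :: glue Rs := by
        intro Rs hl
        have hne : Rs ≠ [] := by intro hc; rw [hc] at hl; simp at hl
        rw [hrho, build_eq Rs m [true] hne (by omega), hl]
        simp
      have hcount : (true :: T).count true = (glue Qs).count true + 1 := by
        rw [hT]; simp
      refine ⟨Qs, ⟨hlen, hD, ?_, ?_⟩, ?_⟩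
      · rw [← count_glue]
        rw [hcount] at hsize
        omega
      · rw [hbuild Qs hlen, hT]
      · rintro Ps ⟨hl, hd, _, hb⟩
        rw [hbuild Ps hl] at hb
        have : T = glue Ps := by
          injection hb
        exact huniq Ps ⟨hl, hd, this⟩
  ·  classical
      have hsf : pathSum m [false] = -1 := by simp [pathSum, stepVal]
      have hst : pathSum m [true] = (m : ℤ) := by simp [pathSum, stepVal]
      have hPne : P ≠ [] := by
        intro hc
        rw [hc] at hsize
        simp at hsize
        omega
      have hrho : rho m = [true] ++ List.replicate m false := rfl
      have hPlen : 1 ≤ P.length := List.length_pos_iff.mpr hPne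
      set t := Nat.findGreatest (fun s => pathSum m (P.take s) = 0) (P.length - 1) with ht
      have hP0 : pathSum m (P.take t) = 0 := by
        have := Nat.findGreatest_spec (P := fun s => pathSum m (List.take s P) = 0)
          (Nat.zero_le (P.length - 1)) (show pathSum m (List.take 0 P) = 0 by rw [List.take_zero]; rfl)
        exact this
      have htle : t ≤ P.length - 1 := Nat.findGreatest_le _
      have hgr : ∀ s, t < s → s ≤ P.length - 1 → pathSum m (P.take s) ≠ 0 :=
        fun s h1 h2 => Nat.findGreatest_is_greatest h1 h2
      have hPAR : P = P.take t ++ P.drop t := (List.take_append_drop t P).symm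
      have hA : IsDyck m (P.take t) :=
        ⟨hP0, fun Q hQ => hP.2 Q (hQ.trans (List.take_prefix _ _))⟩
      have hRsum : pathSum m (P.drop t) = 0 := by
        have h1 : pathSum m (P.take t ++ P.drop t) = 0 := by
          rw [List.take_append_drop]; exact hP.1
        rw [pathSum_append, hP0] at h1
        linarith
      have hRlen : 1 ≤ (P.drop t).length := by rw [List.length_drop]; omega
      have hint : ∀ u, 0 < u → u < (P.drop t).length → 1 ≤ pathSum m ((P.drop t).take u) := by
        intro u hu0 hu1
        have hq : pathSum m (P.take (t + u)) = pathSum m (P.take t) + pathSum m ((P.drop t).take u) := by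
          rw [List.take_add, pathSum_append]
        have hge : 0 ≤ pathSum m (P.take (t + u)) := hP.2 _ (List.take_prefix _ _)
        have hne : pathSum m (P.take (t + u)) ≠ 0 :=
          hgr _ (by omega) (by rw [List.length_drop] at hu1; omega)
        rw [hq, hP0, zero_add] at hge hne
        omega
      obtain ⟨b, S, hbs⟩ := List.exists_cons_of_ne_nil
        (show P.drop t ≠ [] by intro hc; rw [hc] at hRlen; simp at hRlen)
      have hR2 : 2 ≤ (P.drop t).length := by
        by_contra hc
        push_neg at hc
        have hSl : S.length = 0 := by
          have := congrArg List.length hbs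
          simp only [List.length_drop, List.length_cons] at this hc
          omega
        have h1 : S = [] := List.eq_nil_of_length_eq_zero hSl
        rw [hbs, h1] at hRsum
        cases b
        · rw [show pathSum m [false] = -1 from hsf] at hRsum; norm_num at hRsum
        · rw [show pathSum m [true] = (m:ℤ) from hst] at hRsum
          have : (1:ℤ) ≤ (m:ℤ) := by exact_mod_cast hm
          omega
      have hb : b = true := by
        have h1 := hint 1 one_pos (by omega)
        rw [hbs, List.take_succ_cons, List.take_zero] at h1
        cases b
        · rw [show pathSum m [false] = -1 from hsf] at h1; omega
        · rfl
      subst hb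
      have hSsum : pathSum m S = -(m : ℤ) := by
        rw [hbs, pathSum_cons] at hRsum
        simp only [stepVal, if_true] at hRsum
        linarith
      have hSpre : ∀ Q, Q <+: S → -(m : ℤ) ≤ pathSum m Q := by
        intro Q hQ
        obtain ⟨s, rfl⟩ := hQ
        have hpre : P.take t ++ true :: Q <+: P := by
          refine ⟨s, ?_⟩
          conv_rhs => rw [hPAR, hbs]
          simp
        have := hP.2 _ hpre
        rw [pathSum_append, hP0, pathSum_cons] at this
        simp only [stepVal, if_true] at this
        linarith
      obtain ⟨Qs, ⟨hlenQ, hDQ, hSg⟩, huniq⟩ := decomp_unique m m S hSsum hSpre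
      obtain ⟨Rs, Qm, hQs⟩ : ∃ Rs Qm, Qs = Rs ++ [Qm] := by
        rcases List.eq_nil_or_concat Qs with hc | ⟨Rs, Qm, hc⟩
        · rw [hc] at hlenQ; simp at hlenQ
        · exact ⟨Rs, Qm, by simpa [List.concat_eq_append] using hc⟩
      have hRslen : Rs.length = m := by rw [hQs] at hlenQ; simp at hlenQ; omega
      have hRsne : Rs ≠ [] := by intro hc; rw [hc] at hRslen; simp at hRslen; omega
      have hRsD : ∀ Q ∈ Rs, IsDyck m Q := fun Q hQ => hDQ Q (by rw [hQs]; simp [hQ])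
      have hglue : glue Qs = glue Rs ++ false :: Qm := by rw [hQs, glue_concat Rs hRsne]
      have hSlen : S.length = (glue Rs).length + 1 + Qm.length := by
        rw [hSg, hglue]
        simp
        omega
      have hQm : Qm = [] := by
        by_contra hc
        have hlg : (glue Rs).length + 1 < S.length := by
          have := List.length_pos_iff.mpr hc
          omega
        have hpre : S.take ((glue Rs).length + 1) = glue Rs ++ [false] := by
          rw [hSg, hglue, List.take_append,
            List.take_of_length_le (by omega), Nat.add_sub_cancel_left]
          simp
        have h1 := hint ((glue Rs).length + 1 + 1) (by omega)
          (by rw [hbs]; simp; omega)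
        rw [hbs, List.take_succ_cons, pathSum_cons, hpre, pathSum_append,
          glue_sum m Rs hRsD hRsne, hsf] at h1
        simp only [stepVal, if_true] at h1
        rw [hRslen] at h1
        omega
      have hSRs : S = glue Rs ++ [false] := by rw [hSg, hglue, hQm]
      have hbuildRs : ∀ Ts : List (List Bool), Ts.length = m →
          buildAux m (rho m) Ts = true :: (glue Ts ++ [false]) := by
        intro Ts hl
        have hne : Ts ≠ [] := by intro hc; rw [hc] at hl; simp at hl; omega
        rw [hrho, build_eq Ts m [true] hne (by omega), hl]
        have h2 : m + 1 - m = 1 := by omega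
        rw [h2]
        simp
      refine ⟨P.take t :: Rs, ⟨by simp [hRslen], ?_, ?_, ?_⟩, ?_⟩
      · intro Q hQ
        rcases List.mem_cons.mp hQ with rfl | hQ
        · exact hA
        · exact hRsD Q hQ
      · have hc1 : P.count true = (P.take t).count true + (1 + S.count true) := by
          conv_lhs => rw [hPAR, hbs]
          simp [List.count_append, List.count_cons]
          omega
        have hc2 : S.count true = (Rs.map (fun Q => Q.count true)).sum := by
          rw [hSRs, List.count_append, ← count_glue]
          simp
        simp only [List.map_cons, List.sum_cons]
        rw [← hc2]
        omega
      · simp only [List.headD_cons, List.tail_cons]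
        rw [hbuildRs Rs hRslen, ← hSRs, ← hbs]
        exact hPAR
      · rintro Ps' ⟨hl', hd', _, hb'⟩
        obtain ⟨A', Rs', rfl⟩ := List.exists_cons_of_ne_nil
          (show Ps' ≠ [] by intro hc; rw [hc] at hl'; simp at hl')
        have hRl' : Rs'.length = m := by simp at hl'; omega
        simp only [List.headD_cons, List.tail_cons] at hb'
        rw [hbuildRs Rs' hRl'] at hb'
        have hA'D : IsDyck m A' := hd' A' (by simp)
        have hRs'ne : Rs' ≠ [] := by intro hc; rw [hc] at hRl'; simp at hRl'; omega
        have hRs'D : ∀ Q ∈ Rs', IsDyck m Q := fun Q hQ => hd' Q (by simp [hQ])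
        have hlenP : P.length = A'.length + ((glue Rs').length + 2) := by
          rw [hb']; simp
        have hprefA' : A' = P.take A'.length := List.prefix_iff_eq_take.mp ⟨_, hb'.symm⟩
        have hle1 : A'.length ≤ t := by
          apply Nat.le_findGreatest (by omega)
          show pathSum m (P.take A'.length) = 0
          rw [← hprefA']
          exact hA'D.1
        have hA'len : A'.length = t := by
          by_contra hcon
          have hlt : A'.length < t := by omega
          have htake : P.take t = A' ++ (true :: (glue Rs' ++ [false])).take (t - A'.length) := by
            rw [hb', List.take_append, List.take_of_length_le (by omega)]
          obtain ⟨u, hu⟩ : ∃ u, t - A'.length = u + 1 := ⟨t - A'.length - 1, by omega⟩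
          have hu2 : u ≤ (glue Rs').length := by omega
          have htake2 : (true :: (glue Rs' ++ [false])).take (u + 1)
              = true :: (glue Rs').take u := by
            rw [List.take_succ_cons, List.take_append,
              show u - (glue Rs').length = 0 from by omega, List.take_zero, List.append_nil]
          have hglp := glue_prefix_ge m Rs' hRs'D hRs'ne _ (List.take_prefix u (glue Rs'))
          rw [hRl'] at hglp
          have h0 : pathSum m (P.take t) = pathSum m A' + ((m:ℤ) + pathSum m ((glue Rs').take u)) := by
            rw [htake, hu, htake2, pathSum_append, pathSum_cons]
            simp only [stepVal, if_true]
          rw [hP0, hA'D.1] at h0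
          have : (1:ℤ) ≤ (m:ℤ) := by exact_mod_cast hm
          linarith
        have hA'eq : A' = P.take t := by rw [hprefA', hA'len]
        have hdrop : P.drop t = true :: (glue Rs' ++ [false]) := by
          rw [hb', ← hA'len, List.drop_left]
        rw [hbs] at hdrop
        have hSeq : S = glue Rs' ++ [false] := by injection hdrop
        have hSeq2 : S = glue (Rs' ++ [[]]) := by
          rw [glue_concat Rs' hRs'ne]
          exact hSeq
        have hRs'Qs : Rs' ++ [[]] = Qs := by
          apply huniq
          refine ⟨by simp [hRl'], ?_, hSeq2⟩
          intro Q hQ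
          rcases List.mem_append.mp hQ with hQ | hQ
          · exact hRs'D Q hQ
          · simp at hQ
            rw [hQ]
            exact isDyck_nil m
        have hRsRs' : Rs' = Rs := by
          have : Rs' ++ [[]] = Rs ++ [[]] := by rw [hRs'Qs, hQs, hQm]
          exact List.append_cancel_right this
        rw [hA'eq, hRsRs']
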